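/- Let λ ∈ ℝ, q₁, q₂ : ℝ → ℝ continuous, and let F : ℝ → Matrix (Fin 2) (Fin 2) ℝ be differentiable with F'(x) = ![![λ, q₁(x)], ![q₂(x), −λ]] · F(x), with entries f₁₁, f₁₂, f₂₁, f₂₂. Fix A, B, C ∈ ℝ and an open interval I ⊆ ℝ on which P̃ := A·f₁₁² + B·f₁₁·f₁₂ + C·f₁₂² > 0 and Q̃ := A·f₂₁² + B·f₂₁·f₂₂ + C·f₂₂² > 0. Define f̃₁ := √P̃, f̃₂ := √Q̃, Φ := A·f₁₁·f₂₁ + (B/2)·(f₁₁·f₂₂ + f₁₂·f₂₁) + C·f₁₂·f₂₂, and α := Φ − f̃₁·f̃₂. Then f̃₁, f̃₂ are differentiable on I and satisfy the deformed (nonlinear) Dirac equation: f̃₁' = λ·f̃₁ + q₁·f̃₂ + q₁·α/f̃₁ and f̃₂' = q₂·f̃₁ − λ·f̃₂ + q₂·α/f̃₂ on I. -/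

import Mathlib

/-- `P̃ = A·f₁₁² + B·f₁₁·f₁₂ + C·f₁₂²` built from the first row of `F`. -/
def diracP (A B C : ℝ) (F : ℝ → Matrix (Fin 2) (Fin 2) ℝ) (x : ℝ) : ℝ :=
  A * (F x 0 0) ^ 2 + B * (F x 0 0) * (F x 0 1) + C * (F x 0 1) ^ 2

/-- `Q̃ = A·f₂₁² + B·f₂₁·f₂₂ + C·f₂₂²` built from the second row of `F`. -/
def diracQ (A B C : ℝ) (F : ℝ → Matrix (Fin 2) (Fin 2) ℝ) (x : ℝ) : ℝ :=
  A * (F x 1 0) ^ 2 + B * (F x 1 0) * (F x 1 1) + C * (F x 1 1) ^ 2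

/-- Mixed combination `Φ = A·f₁₁·f₂₁ + (B/2)·(f₁₁·f₂₂ + f₁₂·f₂₁) + C·f₁₂·f₂₂`. -/
noncomputable def diracPhi (A B C : ℝ) (F : ℝ → Matrix (Fin 2) (Fin 2) ℝ) (x : ℝ) : ℝ :=
  A * (F x 0 0) * (F x 1 0) + (B / 2) * ((F x 0 0) * (F x 1 1) + (F x 0 1) * (F x 1 0)) +
    C * (F x 0 1) * (F x 1 1)

/-- First component `f̃₁ = √P̃` of the partial solution to the deformed Dirac equation. -/
noncomputable def diracFt₁ (A B C : ℝ) (F : ℝ → Matrix (Fin 2) (Fin 2) ℝ) (x : ℝ) : ℝ :=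
  Real.sqrt (diracP A B C F x)

/-- Second component `f̃₂ = √Q̃` of the partial solution to the deformed Dirac equation. -/
noncomputable def diracFt₂ (A B C : ℝ) (F : ℝ → Matrix (Fin 2) (Fin 2) ℝ) (x : ℝ) : ℝ :=
  Real.sqrt (diracQ A B C F x)

/-- Deformation coefficient `α = Φ − f̃₁·f̃₂`. -/
noncomputable def diracAlpha (A B C : ℝ) (F : ℝ → Matrix (Fin 2) (Fin 2) ℝ) (x : ℝ) : ℝ :=
  diracPhi A B C F x - diracFt₁ A B C F x * diracFt₂ A B C F x

/-!
By the Dirac equation the rows of `F` move by `r₁' = λ r₁ + q₁ r₂` and `r₂' = q₂ r₁ − λ r₂`.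
The derivative of the quadratic form `P̃ = A u² + B u v + C v²` along `r₁` is twice its polar
form paired with `r₁'`, and `Φ` is that polar form on `(r₁, r₂)`, so `P̃' = 2(λ P̃ + q₁ Φ)`;
likewise `Q̃' = 2(q₂ Φ − λ Q̃)`. Hence `(√P̃)' = λ √P̃ + q₁ Φ / √P̃`, and splitting
`Φ = f̃₁ f̃₂ + α` gives the deformed equation; the second component is symmetric.
-/

def quadForm (A B C u v : ℝ) : ℝ :=
  A * u ^ 2 + B * u * v + C * v ^ 2

noncomputable def polarForm (A B C u₁ v₁ u₂ v₂ : ℝ) : ℝ :=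
  A * u₁ * u₂ + (B / 2) * (u₁ * v₂ + v₁ * u₂) + C * v₁ * v₂

theorem polarForm_self (A B C u v : ℝ) : polarForm A B C u v u v = quadForm A B C u v := by
  unfold polarForm quadForm
  ring

theorem polarForm_comm (A B C u₁ v₁ u₂ v₂ : ℝ) :
    polarForm A B C u₁ v₁ u₂ v₂ = polarForm A B C u₂ v₂ u₁ v₁ := by
  unfold polarForm
  ring

theorem polarForm_add_smul_right (A B C u v a b u₁ v₁ u₂ v₂ : ℝ) :
    polarForm A B C u v (a * u₁ + b * u₂) (a * v₁ + b * v₂) =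
      a * polarForm A B C u v u₁ v₁ + b * polarForm A B C u v u₂ v₂ := by
  unfold polarForm
  ring

theorem HasDerivAt.quadForm {u v : ℝ → ℝ} {u' v' x : ℝ} (A B C : ℝ)
    (hu : HasDerivAt u u' x) (hv : HasDerivAt v v' x) :
    HasDerivAt (fun t => quadForm A B C (u t) (v t))
      (2 * polarForm A B C (u x) (v x) u' v') x := by
  have h := (((hu.pow 2).const_mul A).add ((hu.const_mul B).mul hv)).add ((hv.pow 2).const_mul C)
  refine h.congr_deriv ?_
  unfold polarForm
  push_cast
  ring

theorem HasDerivAt.sqrt_of_eq_two_mul {g : ℝ → ℝ} {x c e : ℝ}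
    (hg : HasDerivAt g (2 * (c * g x + e)) x) (hpos : 0 < g x) :
    HasDerivAt (fun t => √(g t)) (c * √(g x) + e / √(g x)) x := by
  convert hg.sqrt hpos.ne' using 1
  have hs : √(g x) ≠ 0 := (Real.sqrt_pos.mpr hpos).ne'
  field_simp
  rw [Real.sq_sqrt hpos.le]

def SolvesDirac (lam : ℝ) (q₁ q₂ : ℝ → ℝ) (F : ℝ → Matrix (Fin 2) (Fin 2) ℝ) : Prop :=
  ∀ (x : ℝ) (i j : Fin 2),
    HasDerivAt (fun t => F t i j) ((!![lam, q₁ x; q₂ x, -lam] * F x) i j) x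

section SolvesDirac

variable {lam : ℝ} {q₁ q₂ : ℝ → ℝ} {F : ℝ → Matrix (Fin 2) (Fin 2) ℝ}

theorem SolvesDirac.hasDerivAt_row_zero (hF : SolvesDirac lam q₁ q₂ F) (x : ℝ) (j : Fin 2) :
    HasDerivAt (fun t => F t 0 j) (lam * F x 0 j + q₁ x * F x 1 j) x := by
  simpa [Matrix.mul_apply, Fin.sum_univ_two] using hF x 0 j

theorem SolvesDirac.hasDerivAt_row_one (hF : SolvesDirac lam q₁ q₂ F) (x : ℝ) (j : Fin 2) :
    HasDerivAt (fun t => F t 1 j) (q₂ x * F x 0 j + -lam * F x 1 j) x := by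
  simpa [Matrix.mul_apply, Fin.sum_univ_two] using hF x 1 j

theorem hasDerivAt_diracP (A B C : ℝ) (hF : SolvesDirac lam q₁ q₂ F) (x : ℝ) :
    HasDerivAt (diracP A B C F) (2 * (lam * diracP A B C F x + q₁ x * diracPhi A B C F x)) x := by
  have h := HasDerivAt.quadForm A B C (hF.hasDerivAt_row_zero x 0) (hF.hasDerivAt_row_zero x 1)
  rwa [polarForm_add_smul_right, polarForm_self] at h

theorem hasDerivAt_diracQ (A B C : ℝ) (hF : SolvesDirac lam q₁ q₂ F) (x : ℝ) :
    HasDerivAt (diracQ A B C F) (2 * (-lam * diracQ A B C F x + q₂ x * diracPhi A B C F x)) x := by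
  have h := HasDerivAt.quadForm A B C (hF.hasDerivAt_row_one x 0) (hF.hasDerivAt_row_one x 1)
  rwa [polarForm_add_smul_right, polarForm_self, polarForm_comm, add_comm] at h

end SolvesDirac

theorem deformed_dirac_partial_solution_general (lam : ℝ) (q₁ q₂ : ℝ → ℝ)
    (F : ℝ → Matrix (Fin 2) (Fin 2) ℝ)
    (hF : ∀ (x : ℝ) (i j : Fin 2),
      HasDerivAt (fun t => F t i j) ((!![lam, q₁ x; q₂ x, -lam] * F x) i j) x)
    (A B C : ℝ) (a b : ℝ)
    (hP : ∀ x ∈ Set.Ioo a b, 0 < diracP A B C F x)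
    (hQ : ∀ x ∈ Set.Ioo a b, 0 < diracQ A B C F x) :
    ∀ x ∈ Set.Ioo a b,
      HasDerivAt (diracFt₁ A B C F)
        (lam * diracFt₁ A B C F x + q₁ x * diracFt₂ A B C F x +
          q₁ x * diracAlpha A B C F x / diracFt₁ A B C F x) x ∧
      HasDerivAt (diracFt₂ A B C F)
        (q₂ x * diracFt₁ A B C F x - lam * diracFt₂ A B C F x +
          q₂ x * diracAlpha A B C F x / diracFt₂ A B C F x) x := by
  intro x hx
  have hP₀ : √(diracP A B C F x) ≠ 0 := (Real.sqrt_pos.mpr (hP x hx)).ne'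
  have hQ₀ : √(diracQ A B C F x) ≠ 0 := (Real.sqrt_pos.mpr (hQ x hx)).ne'
  constructor
  · refine ((hasDerivAt_diracP A B C hF x).sqrt_of_eq_two_mul (hP x hx)).congr_deriv ?_
    unfold diracAlpha diracFt₁ diracFt₂
    field_simp
    ring
  · refine ((hasDerivAt_diracQ A B C hF x).sqrt_of_eq_two_mul (hQ x hx)).congr_deriv ?_
    unfold diracAlpha diracFt₁ diracFt₂
    field_simp
    ring

/-- On an open interval where `P̃ > 0` and `Q̃ > 0`, the pair
`f̃ = (√P̃, √Q̃)` is differentiable and solves the deformed (nonlinear) Dirac equation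
`f̃₁' = λ·f̃₁ + q₁·f̃₂ + q₁·α/f̃₁`, `f̃₂' = q₂·f̃₁ − λ·f̃₂ + q₂·α/f̃₂`
with `α = Φ − f̃₁·f̃₂`. -/
theorem deformed_dirac_partial_solution (lam : ℝ) (q₁ q₂ : ℝ → ℝ)
    (hq₁ : Continuous q₁) (hq₂ : Continuous q₂)
    (F : ℝ → Matrix (Fin 2) (Fin 2) ℝ)
    (hF : ∀ (x : ℝ) (i j : Fin 2),
      HasDerivAt (fun t => F t i j) ((!![lam, q₁ x; q₂ x, -lam] * F x) i j) x)
    (A B C : ℝ) (a b : ℝ)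
    (hP : ∀ x ∈ Set.Ioo a b, 0 < diracP A B C F x)
    (hQ : ∀ x ∈ Set.Ioo a b, 0 < diracQ A B C F x) :
    ∀ x ∈ Set.Ioo a b,
      HasDerivAt (diracFt₁ A B C F)
        (lam * diracFt₁ A B C F x + q₁ x * diracFt₂ A B C F x +
          q₁ x * diracAlpha A B C F x / diracFt₁ A B C F x) x ∧
      HasDerivAt (diracFt₂ A B C F)
        (q₂ x * diracFt₁ A B C F x - lam * diracFt₂ A B C F x +
          q₂ x * diracAlpha A B C F x / diracFt₂ A B C F x) x :=
  deformed_dirac_partial_solution_general lam q₁ q₂ F hF A B C a b hP hQ
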